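/- Let A and B be disjoint nonempty finite sets with |A| = M and |B| = N, let A_m ⊆ A and B_n ⊆ B be subsets with |A_m| = m and |B_n| = n, let k, ℓ be natural numbers, and let w : Fin k → ℚ, y ∈ ℚ, and x : Fin ℓ → ℚ be weights. Consider labellings of the complete bipartite graph on A × B with k+1 symmetric colours (weights w for the first k and y for the last symmetric colour) and ℓ directed colours (weights x). Then the sum of the weights of those labellings in which the edges of the last symmetric colour form a perfect matching between A_m and B_n equals F'(n,m) · y^n · L_{k,ℓ}(M·N − n, w, x), where F'(n,m) := n! if n = m and F'(n,m) := 0 otherwise. -/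
import Mathlib


/-- `L_{k,ℓ}(N, w, x)`, the weighted count of labellings of `N` edges with `k`
symmetric and `ℓ` directed colours; tuples summing to `N` are encoded as
functions `(Fin k ⊕ Fin ℓ) → Fin (N+1)`. -/
def Lkl (k l N : ℕ) (w : Fin k → ℚ) (x : Fin l → ℚ) : ℚ :=
  ∑ d ∈ Finset.univ.filter
      (fun d : (Fin k ⊕ Fin l) → Fin (N + 1) => ∑ s : Fin k ⊕ Fin l, (d s).val = N),
    (Nat.multinomial Finset.univ (fun s => (d s).val) : ℚ) *
      2 ^ (∑ q : Fin l, (d (Sum.inr q)).val) *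
      (∏ p : Fin k, w p ^ (d (Sum.inl p)).val) *
      (∏ q : Fin l, x q ^ (d (Sum.inr q)).val)

lemma Lkl_eq_pow (k l N : ℕ) (w : Fin k → ℚ) (x : Fin l → ℚ) :
    Lkl k l N w x = (∑ p, w p + ∑ q, 2 * x q) ^ N := by
  classical
  have h : (∑ p, w p + ∑ q, 2 * x q)
      = ∑ s : Fin k ⊕ Fin l, Sum.elim w (fun q => 2 * x q) s := by
    rw [Fintype.sum_sum_type]; rfl
  rw [h, Finset.sum_pow_eq_sum_piAntidiag]
  rw [Lkl]
  refine Finset.sum_bij' (fun d _ => fun s => (d s).val)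
    (fun f hf => fun s => ⟨f s, ?_⟩) ?_ ?_ ?_ ?_ ?_
  · have := (Finset.mem_piAntidiag.mp hf).1
    have : f s ≤ N := by
      rw [← this]
      exact Finset.single_le_sum (fun i _ => Nat.zero_le _) (Finset.mem_univ s)
    omega
  · intro d hd
    simp only [Finset.mem_filter, Finset.mem_univ, true_and] at hd
    simp [Finset.mem_piAntidiag, hd]
  · intro f hf
    simp only [Finset.mem_filter, Finset.mem_univ, true_and]
    exact (Finset.mem_piAntidiag.mp hf).1
  · intro d hd; rfl
  · intro f hf; rfl
  · intro d hd
    rw [Fintype.prod_sum_type]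
    simp only [Sum.elim_inl, Sum.elim_inr, mul_pow]
    rw [Finset.prod_mul_distrib, Finset.prod_pow_eq_pow_sum]
    ring

/-- The edges of the last symmetric colour form a perfect matching between
`A_m` and `B_n`: every such edge joins `A_m` to `B_n`, and every element of
`A_m` and of `B_n` lies on exactly one such edge. -/
def MatchesBetween {α : Type*} {A B : Finset α} {k l : ℕ} (Am Bn : Finset α)
    (c : {a // a ∈ A} × {b // b ∈ B} → Fin (k + 1) ⊕ (Fin l × Bool)) : Prop :=
  (∀ (a : {a // a ∈ A}) (b : {b // b ∈ B}),
      c (a, b) = Sum.inl (Fin.last k) → a.1 ∈ Am ∧ b.1 ∈ Bn) ∧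
  (∀ a : {a // a ∈ A}, a.1 ∈ Am → ∃! b : {b // b ∈ B}, c (a, b) = Sum.inl (Fin.last k)) ∧
  (∀ b : {b // b ∈ B}, b.1 ∈ Bn → ∃! a : {a // a ∈ A}, c (a, b) = Sum.inl (Fin.last k))

open Classical in
/-- Proposition: the weighted number of labellings of the complete bipartite
graph on `A × B` with `k+1` symmetric and `ℓ` directed colours whose last
symmetric colour forms a perfect matching between `A_m` and `B_n` equals
`F'(n,m) · y^n · L_{k,ℓ}(MN − n, w, x)`, where `F'(n,m) = n!` if `n = m` and
`0` otherwise. -/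
theorem weighted_labellings_bipartiteMatching {α : Type*} [DecidableEq α]
    (A B Am Bn : Finset α) (M N m n k l : ℕ)
    (hA : A.Nonempty) (hB : B.Nonempty) (hdisj : Disjoint A B)
    (hAcard : A.card = M) (hBcard : B.card = N)
    (hAm : Am ⊆ A) (hBn : Bn ⊆ B) (hm : Am.card = m) (hn : Bn.card = n)
    (w : Fin k → ℚ) (y : ℚ) (x : Fin l → ℚ) :
    (∑ c ∈ Finset.univ.filter
        (fun c : {a // a ∈ A} × {b // b ∈ B} → Fin (k + 1) ⊕ (Fin l × Bool) =>
          MatchesBetween Am Bn c),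
      ∏ p : {a // a ∈ A} × {b // b ∈ B},
        Sum.elim ((Fin.snoc w y : Fin (k + 1) → ℚ)) (fun qb => x qb.1) (c p)) =
      (if n = m then (n.factorial : ℚ) else 0) * y ^ n * Lkl k l (M * N - n) w x := by
    classical
  set A' := {a // a ∈ A}
  set B' := {b // b ∈ B}
  set E := A' × B'
  set C := (Fin (k + 1) ⊕ (Fin l × Bool))
  set W : C → ℚ := Sum.elim ((Fin.snoc w y : Fin (k + 1) → ℚ)) (fun qb => x qb.1) with hW
  set la : C := Sum.inl (Fin.last k) with hla
  set T : ℚ := ∑ p, w p + ∑ q, 2 * x q with hT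
  -- matchings as finsets of edges
  set IsM : Finset E → Prop := fun s =>
    (∀ e ∈ s, e.1.1 ∈ Am ∧ e.2.1 ∈ Bn) ∧
    (∀ a : A', a.1 ∈ Am → ∃! b : B', (a, b) ∈ s) ∧
    (∀ b : B', b.1 ∈ Bn → ∃! a : A', (a, b) ∈ s) with hIsM
  set Ms : Finset (Finset E) := Finset.univ.filter IsM with hMs
  set fib : (E → C) → Finset E := fun c => Finset.univ.filter (fun e => c e = la) with hfib
  -- step A : rewrite the filter
  have stepA : ∀ c : E → C, MatchesBetween Am Bn c ↔ fib c ∈ Ms := by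
    intro c
    simp only [hMs, Finset.mem_filter, Finset.mem_univ, true_and, hIsM, hfib,
      MatchesBetween]
    constructor
    · rintro ⟨h1, h2, h3⟩
      refine ⟨fun e he => h1 e.1 e.2 (by simpa using he), fun a ha => ?_, fun b hb => ?_⟩
      · obtain ⟨b, hb1, hb2⟩ := h2 a ha
        exact ⟨b, by simpa using hb1, fun b' hb' => hb2 b' (by simpa using hb')⟩
      · obtain ⟨a, ha1, ha2⟩ := h3 b hb
        exact ⟨a, by simpa using ha1, fun a' ha' => ha2 a' (by simpa using ha')⟩
    · rintro ⟨h1, h2, h3⟩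
      refine ⟨fun a b hab => h1 (a, b) (by simpa using hab), fun a ha => ?_, fun b hb => ?_⟩
      · obtain ⟨b, hb1, hb2⟩ := h2 a ha
        exact ⟨b, by simpa using hb1, fun b' hb' => hb2 b' (by simpa using hb')⟩
      · obtain ⟨a, ha1, ha2⟩ := h3 b hb
        exact ⟨a, by simpa using ha1, fun a' ha' => ha2 a' (by simpa using ha')⟩
  -- every matching has cardinality n
  have cardM : ∀ s ∈ Ms, s.card = n := by
    intro s hs
    rw [hMs, Finset.mem_filter] at hs
    obtain ⟨-, h1, h2, h3⟩ := hs
    rw [← hn]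
    apply Finset.card_bij (fun e _ => e.2.1)
    · intro e he; exact (h1 e he).2
    · intro e₁ h₁e e₂ h₂e heq
      have hb : e₁.2 = e₂.2 := Subtype.ext heq
      have hbB : e₁.2.1 ∈ Bn := (h1 e₁ h₁e).2
      obtain ⟨a, -, ha2⟩ := h3 e₁.2 hbB
      have h1' : e₁.1 = a := ha2 e₁.1 h₁e
      have h2' : e₂.1 = a := ha2 e₂.1 (by show (e₂.1, e₁.2) ∈ s; rw [hb]; exact h₂e)
      exact Prod.ext (h1'.trans h2'.symm) hb
    · intro b hb
      obtain ⟨a, ha1, -⟩ := h3 ⟨b, hBn hb⟩ hb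
      exact ⟨(a, ⟨b, hBn hb⟩), ha1, rfl⟩
  -- the sum splits fiberwise
  rw [Finset.filter_congr (fun c _ => by
    simp only [stepA c] : ∀ c ∈ (Finset.univ : Finset (E → C)), MatchesBetween Am Bn c ↔ fib c ∈ Ms)]
  rw [← Finset.sum_fiberwise_eq_sum_filter Finset.univ Ms fib
    (fun c => ∏ p : E, W (c p))]
  -- inner sums
  have inner : ∀ s ∈ Ms, (∑ c ∈ Finset.univ.filter (fun c : E → C => fib c = s),
      ∏ p : E, W (c p)) = y ^ n * T ^ (M * N - n) := by
    intro s hs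
    have hc := cardM s hs
    set t : E → Finset C := fun e => if e ∈ s then {la} else Finset.univ.erase la with ht
    have hfilt : Finset.univ.filter (fun c : E → C => fib c = s) = Fintype.piFinset t := by
      ext c
      simp only [Finset.mem_filter, Finset.mem_univ, true_and, Fintype.mem_piFinset,
        hfib, ht]
      rw [Finset.ext_iff]
      constructor
      · intro h e
        have := h e
        simp only [Finset.mem_filter, Finset.mem_univ, true_and] at this
        by_cases he : e ∈ s <;> simp [he, Finset.mem_erase] at this ⊢ <;> tauto
      · intro h e
        have := h e
        simp only [Finset.mem_filter, Finset.mem_univ, true_and]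
        by_cases he : e ∈ s <;> simp [he, Finset.mem_erase] at this ⊢ <;> tauto
    rw [hfilt, ← Finset.prod_univ_sum t (fun _ col => W col)]
    have hsum : ∀ e : E, (∑ col ∈ t e, W col) = if e ∈ s then y else T := by
      intro e
      by_cases he : e ∈ s
      · simp only [ht, he, if_true, Finset.sum_singleton, hW, hla, Sum.elim_inl,
          Fin.snoc_last]
      · simp only [ht, he, if_false]
        rw [Finset.sum_erase_eq_sub (Finset.mem_univ la)]
        have : (∑ col : C, W col) = (∑ p, w p + y) + ∑ q, 2 * x q := by
          rw [Fintype.sum_sum_type]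
          congr 1
          · rw [hW]
            simp only [Sum.elim_inl]
            rw [Fin.sum_univ_castSucc]
            simp [Fin.snoc_castSucc, Fin.snoc_last]
          · rw [Fintype.sum_prod_type]
            simp only [hW, Sum.elim_inr]
            rw [Finset.sum_congr rfl (fun q _ => by
              simp : ∀ q ∈ (Finset.univ : Finset (Fin l)),
                (∑ b : Bool, x q) = 2 * x q)]
        rw [this]
        simp only [hW, hla, Sum.elim_inl, Fin.snoc_last, hT]
        ring
    rw [Finset.prod_congr rfl (fun e _ => hsum e)]
    rw [Finset.prod_ite (fun _ => y) (fun _ => T), Finset.prod_const, Finset.prod_const]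
    have h₁ : (Finset.univ.filter (fun e : E => e ∈ s)) = s := by
      simp [Finset.filter_mem_eq_inter]
    have h₂ : (Finset.univ.filter (fun e : E => ¬ e ∈ s)).card = M * N - n := by
      rw [← Finset.sdiff_eq_filter, Finset.card_sdiff_of_subset (Finset.subset_univ s),
        Finset.card_univ, hc]
      congr 1
      rw [show Fintype.card E = Fintype.card A' * Fintype.card B' from Fintype.card_prod _ _,
        Fintype.card_coe, Fintype.card_coe, hAcard, hBcard]
    rw [h₁, hc, h₂]
  rw [Finset.sum_congr rfl inner, Finset.sum_const, nsmul_eq_mul]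
  -- count the matchings
  have hcount : (Ms.card : ℚ) = if n = m then (n.factorial : ℚ) else 0 := by
    set Am' := {a : A' // a.1 ∈ Am} with hAm'
    set Bn' := {b : B' // b.1 ∈ Bn} with hBn'
    have cardAm' : Fintype.card Am' = m := by
      rw [← hm, ← Fintype.card_coe Am]
      exact Fintype.card_congr ⟨fun a => ⟨a.1.1, a.2⟩, fun z => ⟨⟨z.1, hAm z.2⟩, z.2⟩,
        fun a => by ext; rfl, fun z => by ext; rfl⟩
    have cardBn' : Fintype.card Bn' = n := by
      rw [← hn, ← Fintype.card_coe Bn]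
      exact Fintype.card_congr ⟨fun a => ⟨a.1.1, a.2⟩, fun z => ⟨⟨z.1, hBn z.2⟩, z.2⟩,
        fun a => by ext; rfl, fun z => by ext; rfl⟩
    set gr : (Am' ≃ Bn') → Finset E := fun σ =>
      Finset.univ.image (fun a : Am' => ((a.1, (σ a).1) : E)) with hgr
    have hgr_mem : ∀ (σ : Am' ≃ Bn') (e : E), e ∈ gr σ ↔ ∃ a : Am', a.1 = e.1 ∧ (σ a).1 = e.2 := by
      intro σ e
      simp only [hgr, Finset.mem_image, Finset.mem_univ, true_and]
      constructor
      · rintro ⟨a, rfl⟩; exact ⟨a, rfl, rfl⟩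
      · rintro ⟨a, h1, h2⟩; exact ⟨a, Prod.ext h1 h2⟩
    have hMseq : Ms = Finset.univ.image gr := by
      ext s
      simp only [hMs, Finset.mem_filter, Finset.mem_univ, true_and, Finset.mem_image, hIsM]
      constructor
      · rintro ⟨h1, h2, h3⟩
        -- construct the bijection
        have hf : ∀ a : Am', ∃! b : B', (a.1, b) ∈ s := fun a => h2 a.1 a.2
        have hg : ∀ b : Bn', ∃! a : A', (a, b.1) ∈ s := fun b => h3 b.1 b.2
        set f : Am' → Bn' := fun a =>
          ⟨Fintype.choose _ (hf a), (h1 _ (Fintype.choose_spec _ (hf a))).2⟩ with hfd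
        set g : Bn' → Am' := fun b =>
          ⟨Fintype.choose _ (hg b), (h1 _ (Fintype.choose_spec _ (hg b))).1⟩ with hgd
        have hfs : ∀ a : Am', (a.1, (f a).1) ∈ s := fun a => Fintype.choose_spec _ (hf a)
        have hgs : ∀ b : Bn', ((g b).1, b.1) ∈ s := fun b => Fintype.choose_spec _ (hg b)
        have hlinv : ∀ a : Am', g (f a) = a := by
          intro a
          have := (hg (f a)).unique (hgs (f a)) (hfs a)
          exact Subtype.ext this
        have hrinv : ∀ b : Bn', f (g b) = b := by
          intro b
          have := (hf (g b)).unique (hfs (g b)) (hgs b)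
          exact Subtype.ext this
        refine ⟨⟨f, g, hlinv, hrinv⟩, ?_⟩
        ext e
        rw [hgr_mem]
        constructor
        · rintro ⟨a, ha1, ha2⟩
          have h := hfs a
          rw [ha1] at h
          have h2 : ((f a : B')) = e.2 := ha2
          rw [h2] at h
          exact h
        · intro he
          have he1 : e.1.1 ∈ Am := (h1 e he).1
          refine ⟨⟨e.1, he1⟩, rfl, ?_⟩
          exact (hf ⟨e.1, he1⟩).unique (hfs ⟨e.1, he1⟩) he
      · rintro ⟨σ, rfl⟩
        refine ⟨?_, ?_, ?_⟩
        · intro e he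
          rw [hgr_mem] at he
          obtain ⟨a, ha1, ha2⟩ := he
          exact ⟨ha1 ▸ a.2, ha2 ▸ (σ a).2⟩
        · intro a ha
          refine ⟨(σ ⟨a, ha⟩).1, ?_, ?_⟩
          · exact (hgr_mem σ _).mpr ⟨⟨a, ha⟩, rfl, rfl⟩
          · intro b hb
            obtain ⟨a', ha1, ha2⟩ := (hgr_mem σ (a, b)).mp hb
            have h : a' = ⟨a, ha⟩ := Subtype.ext ha1
            rw [h] at ha2
            exact ha2.symm
        · intro b hb
          refine ⟨(σ.symm ⟨b, hb⟩).1, ?_, ?_⟩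
          · exact (hgr_mem σ _).mpr ⟨σ.symm ⟨b, hb⟩, rfl, by rw [Equiv.apply_symm_apply]⟩
          · intro a ha
            obtain ⟨a', ha1, ha2⟩ := (hgr_mem σ (a, b)).mp ha
            have hσ : σ a' = ⟨b, hb⟩ := Subtype.ext ha2
            have h : a = ↑a' := ha1.symm
            rw [h, ← hσ, Equiv.symm_apply_apply]
      -- done with hMseq
    have hgr_inj : Function.Injective gr := by
      intro σ σ' h
      ext a
      have : ((a.1, (σ a).1) : E) ∈ gr σ' := by
        rw [← h, hgr_mem]; exact ⟨a, rfl, rfl⟩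
      rw [hgr_mem] at this
      obtain ⟨a', ha1, ha2⟩ := this
      have h2 : a' = a := Subtype.ext ha1
      rw [h2] at ha2
      exact congrArg Subtype.val ha2.symm
    rw [hMseq, Finset.card_image_of_injective _ hgr_inj, Finset.card_univ]
    by_cases h : n = m
    · have : Nonempty (Am' ≃ Bn') := by
        rw [← Fintype.card_eq]; rw [cardAm', cardBn', h]
      obtain ⟨e⟩ := this
      rw [Fintype.card_equiv e, cardAm', if_pos h, ← h]
    · rw [if_neg h]
      have : IsEmpty (Am' ≃ Bn') := by
        rw [isEmpty_iff]
        intro e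
        exact h (by rw [← cardBn', ← cardAm', Fintype.card_congr e])
      rw [Fintype.card_eq_zero]
      norm_num
  rw [hcount, Lkl_eq_pow, ← hT]
  ring
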